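/- arXiv:1305.1677 — 6 statements merged into one kernel-verified Lean document; each statement's English description precedes it below -/
import Mathlib

section
/- If a configuration c of a connected graph G admits a finite sequence of legal vertex firings in which every vertex of G fires at least once, then c is volatile (i.e., admits an infinite legal firing sequence). -/
variable {V : Type*} [Fintype V] [DecidableEq V]

/-- Firing vertex `v`: remove `deg v` chips from `v`, add one chip to each neighbour. -/
def fire (G : SimpleGraph V) [DecidableRel G.Adj] (c : V → ℕ) (v : V) : V → ℕ :=
  fun u => if u = v then c v - G.degree v else c u + (if G.Adj v u then 1 else 0)

/-- Configuration after firing `f 0, f 1, …, f (m-1)` in order. -/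
def fireIter (G : SimpleGraph V) [DecidableRel G.Adj] (c : V → ℕ) (f : ℕ → V) : ℕ → V → ℕ
  | 0 => c
  | m + 1 => fire G (fireIter G c f m) (f m)

/-- A configuration is volatile if it admits an infinite legal firing sequence. -/
def Volatile (G : SimpleGraph V) [DecidableRel G.Adj] (c : V → ℕ) : Prop :=
  ∃ f : ℕ → V, ∀ m : ℕ, G.degree (f m) ≤ fireIter G c f m (f m)

/-- Configuration after firing a finite list of vertices in order. -/
def fireList (G : SimpleGraph V) [DecidableRel G.Adj] : (V → ℕ) → List V → (V → ℕ)
  | c, [] => c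
  | c, v :: l => fireList G (fire G c v) l

/-- A finite firing list is legal if each vertex has at least its degree in chips when fired. -/
def LegalList (G : SimpleGraph V) [DecidableRel G.Adj] : (V → ℕ) → List V → Prop
  | _, [] => True
  | c, v :: l => G.degree v ≤ c v ∧ LegalList G (fire G c v) l
/-!
Firing a vertex `v` whose neighbours all fire afterwards hands it back at least `deg v` chips.
So if a list `l` fires every vertex, the vertex whose last firing in `l` comes earliest can fire
again after `l`; appending it yields a list that still fires every vertex, and repeating this
forever extends the legal list `l` to an infinite legal firing sequence.
-/

namespace List

theorem exists_eq_append_cons_forall_mem {α : Type*} :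
    ∀ {l : List α}, l ≠ [] →
      ∃ (l₁ : List α) (v : α) (s : List α),
        l = l₁ ++ v :: s ∧ v ∉ s ∧ ∀ u ∈ l, u ≠ v → u ∈ s
  | [], h => absurd rfl h
  | a :: t, _ => by
    by_cases hat : a ∈ t
    · obtain ⟨l₁, v, s, rfl, hvs, hs⟩ := exists_eq_append_cons_forall_mem (ne_nil_of_mem hat)
      refine ⟨a :: l₁, v, s, rfl, hvs, fun u hu huv => ?_⟩
      rcases mem_cons.mp hu with rfl | hu
      exacts [hs u hat huv, hs u hu huv]
    · exact ⟨[], a, t, rfl, hat, fun u hu hua => (mem_cons.mp hu).resolve_left hua⟩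

end List

section Firing

variable (G : SimpleGraph V) [DecidableRel G.Adj]

theorem fireList_append (c : V → ℕ) (l₁ l₂ : List V) :
    fireList G c (l₁ ++ l₂) = fireList G (fireList G c l₁) l₂ := by
  induction l₁ generalizing c with
  | nil => rfl
  | cons a t ih => exact ih (fire G c a)

theorem fireList_apply_of_notMem (c : V → ℕ) {v : V} {s : List V} (hv : v ∉ s) :
    fireList G c s v = c v + s.countP (G.Adj · v) := by
  induction s generalizing c with
  | nil => simp [fireList]
  | cons a t ih =>
    obtain ⟨hva, hvt⟩ := List.ne_and_not_mem_of_not_mem_cons hv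
    simp only [fireList, ih _ hvt, fire, if_neg hva, List.countP_cons, G.adj_comm a v,
      decide_eq_true_eq]
    ring

theorem degree_le_countP {v : V} {s : List V} (hs : ∀ u, G.Adj v u → u ∈ s) :
    G.degree v ≤ s.countP (G.Adj · v) := by
  have hsub : G.neighborFinset v ⊆ (s.filter (G.Adj · v)).toFinset := fun u hu => by
    rw [SimpleGraph.mem_neighborFinset] at hu
    simpa [List.mem_filter] using ⟨hs u hu, hu.symm⟩
  calc G.degree v ≤ (s.filter (G.Adj · v)).toFinset.card := Finset.card_le_card hsub
    _ ≤ (s.filter (G.Adj · v)).length := List.toFinset_card_le _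
    _ = s.countP (G.Adj · v) := (List.countP_eq_length_filter ..).symm

theorem exists_degree_le_fireList [Nonempty V] (c : V → ℕ) {l : List V} (hl : ∀ v, v ∈ l) :
    ∃ v, G.degree v ≤ fireList G c l v := by
  obtain ⟨l₁, v, s, rfl, hvs, hs⟩ :=
    List.exists_eq_append_cons_forall_mem (List.ne_nil_of_mem (hl (Classical.arbitrary V)))
  refine ⟨v, ?_⟩
  rw [fireList_append, fireList, fireList_apply_of_notMem G _ hvs]
  exact (degree_le_countP G fun u huv => hs u (hl u) (G.ne_of_adj huv).symm).trans
    (Nat.le_add_left _ _)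

theorem fireIter_succ (c : V → ℕ) (f : ℕ → V) (m : ℕ) :
    fireIter G c f (m + 1) = fireIter G (fire G c (f 0)) (fun n => f (n + 1)) m := by
  induction m with
  | zero => rfl
  | succ m ih => rw [fireIter, ih]; rfl

theorem Volatile.of_fire {c : V → ℕ} {v : V} (hv : G.degree v ≤ c v)
    (h : Volatile G (fire G c v)) : Volatile G c := by
  obtain ⟨f, hf⟩ := h
  refine ⟨Nat.rec v fun n _ => f n, fun m => ?_⟩
  cases m with
  | zero => exact hv
  | succ m => rw [fireIter_succ]; exact hf m

theorem Volatile.of_legalList {c : V → ℕ} {l : List V} (hl : LegalList G c l)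
    (h : Volatile G (fireList G c l)) : Volatile G c := by
  induction l generalizing c with
  | nil => exact h
  | cons v t ih => exact Volatile.of_fire G hl.1 (ih hl.2 h)

theorem volatile_of_forall_exists_fire (Q : (V → ℕ) → Prop) {c : V → ℕ} (hc : Q c)
    (hQ : ∀ d, Q d → ∃ v, G.degree v ≤ d v ∧ Q (fire G d v)) : Volatile G c := by
  choose next hnext hQnext using hQ
  let state : ℕ → Subtype Q :=
    Nat.rec ⟨c, hc⟩ fun _ d => ⟨fire G d.1 (next d.1 d.2), hQnext d.1 d.2⟩
  have hstate : ∀ m, fireIter G c (fun n => next (state n).1 (state n).2) m = (state m).1 := by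
    intro m
    induction m with
    | zero => rfl
    | succ m ih => rw [fireIter, ih]
  exact ⟨fun n => next (state n).1 (state n).2, fun m => by rw [hstate]; exact hnext _ _⟩

theorem volatile_fireList_of_forall_mem [Nonempty V] (c : V → ℕ) {l : List V}
    (hl : ∀ v, v ∈ l) : Volatile G (fireList G c l) := by
  refine volatile_of_forall_exists_fire G
    (fun d => ∃ l : List V, (∀ v, v ∈ l) ∧ fireList G c l = d) ⟨l, hl, rfl⟩ ?_
  rintro _ ⟨l, hl, rfl⟩
  obtain ⟨v, hv⟩ := exists_degree_le_fireList G c hl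
  exact ⟨v, hv, l ++ [v], fun u => List.mem_append_left _ (hl u), by rw [fireList_append]; rfl⟩

end Firing

/-- If a configuration of a connected graph admits a finite legal firing
sequence in which every vertex fires at least once, then it is volatile. -/
theorem stmt0 (G : SimpleGraph V) [DecidableRel G.Adj] (hconn : G.Connected)
    (c : V → ℕ) (l : List V) (hleg : LegalList G c l) (hall : ∀ v : V, v ∈ l) :
    Volatile G c :=
  have := hconn.nonempty
  Volatile.of_legalList G hleg (volatile_fireList_of_forall_mem G c hall)
end

section
/- Let c₁ and c₂ be configurations of a graph G with c₁(v) ≥ c₂(v) for every vertex v. If c₂ is volatile, then c₁ is volatile. -/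
variable {V : Type*} [Fintype V] [DecidableEq V]

lemma fire_mono (G : SimpleGraph V) [DecidableRel G.Adj] {c₁ c₂ : V → ℕ}
    (h : ∀ v, c₂ v ≤ c₁ v) (v : V) : ∀ u, fire G c₂ v u ≤ fire G c₁ v u := by
  intro u
  unfold fire
  split
  · exact Nat.sub_le_sub_right (h v) _
  · exact Nat.add_le_add_right (h u) _

lemma fireIter_mono (G : SimpleGraph V) [DecidableRel G.Adj] {c₁ c₂ : V → ℕ}
    (h : ∀ v, c₂ v ≤ c₁ v) (f : ℕ → V) :
    ∀ m u, fireIter G c₂ f m u ≤ fireIter G c₁ f m u := by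
  intro m
  induction m with
  | zero => exact h
  | succ n ih => exact fire_mono G ih (f n)

/-- If `c₁` dominates `c₂` and `c₂` is volatile, then `c₁` is volatile. -/
theorem stmt1 (G : SimpleGraph V) [DecidableRel G.Adj] (c₁ c₂ : V → ℕ)
    (hdom : ∀ v, c₂ v ≤ c₁ v) (hvol : Volatile G c₂) :
    Volatile G c₁ := by
  obtain ⟨f, hf⟩ := hvol
  exact ⟨f, fun m => (hf m).trans (fireIter_mono G hdom f m (f m))⟩
end

section
/- Let c be a configuration of K_n with c(v) ≤ n−1 for all v, and suppose u₁, u₂, …, u_n is a legal firing sequence of length n under c. Then the u_i are pairwise distinct. -/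
/-- Firing vertex `v` in `K_n`: remove `n-1` chips from `v`, add one chip to each other vertex. -/
def fireK (n : ℕ) (c : Fin n → ℕ) (v : Fin n) : Fin n → ℕ :=
  fun u => if u = v then c v - (n - 1) else c u + 1

/-- Configuration after firing `f 0, …, f (m-1)` in order in `K_n`. -/
def fireIterK (n : ℕ) (c : Fin n → ℕ) (f : ℕ → Fin n) : ℕ → Fin n → ℕ
  | 0 => c
  | m + 1 => fireK n (fireIterK n c f m) (f m)

/-- A configuration of `K_n` is volatile if it admits an infinite legal firing sequence. -/
def VolatileK (n : ℕ) (c : Fin n → ℕ) : Prop :=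
  ∃ f : ℕ → Fin n, ∀ m : ℕ, n - 1 ≤ fireIterK n c f m (f m)

/-- Configuration after firing a finite list of vertices in order in `K_n`. -/
def fireListK (n : ℕ) : (Fin n → ℕ) → List (Fin n) → (Fin n → ℕ)
  | c, [] => c
  | c, v :: l => fireListK n (fireK n c v) l

/-- A finite firing list in `K_n` is legal if each fired vertex has at least `n-1` chips. -/
def LegalListK (n : ℕ) : (Fin n → ℕ) → List (Fin n) → Prop
  | _, [] => True
  | c, v :: l => n - 1 ≤ c v ∧ LegalListK n (fireK n c v) l

lemma key (n : ℕ) : ∀ (l : List (Fin n)) (c : Fin n → ℕ) (k : ℕ) (P : Fin n → Prop),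
    k + l.length ≤ n →
    (∀ v, P v → c v < k) →
    (∀ v, ¬ P v → c v ≤ n - 1 + k) →
    LegalListK n c l →
    l.Nodup ∧ ∀ v ∈ l, ¬ P v := by
  intro l
  induction l with
  | nil => intro c k P _ _ _ _; simp
  | cons u l ih =>
    intro c k P hkn hP hnP hleg
    simp only [List.length_cons] at hkn
    obtain ⟨hcu, hleg'⟩ := hleg
    have hPu : ¬ P u := by
      intro h
      have := hP u h
      omega
    have hstep := ih (fireK n c u) (k + 1) (fun v => P v ∨ v = u)
      (by omega)
      (by
        intro v hv
        rcases hv with hv | rfl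
        · have hvu : v ≠ u := fun h => hPu (h ▸ hv)
          simp only [fireK, if_neg hvu]
          have := hP v hv; omega
        · have : c v ≤ n - 1 + k := hnP v hPu
          have hfv : fireK n c v v = c v - (n - 1) := by simp [fireK]
          rw [hfv]
          omega)
      (by
        intro v hv
        rw [not_or] at hv
        simp only [fireK, if_neg hv.2]
        have := hnP v hv.1; omega)
      hleg'
    obtain ⟨hnd, hmem⟩ := hstep
    refine ⟨List.nodup_cons.2 ⟨fun h => (hmem u h) (Or.inr rfl), hnd⟩, ?_⟩
    intro v hv
    rcases List.mem_cons.1 hv with rfl | hv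
    · exact hPu
    · exact fun h => hmem v hv (Or.inl h)

/-- If `c(v) ≤ n-1` for all `v` and `u₁,…,u_n` is a legal firing sequence of
length `n` under `c` in `K_n`, then the `u_i` are pairwise distinct. -/
theorem stmt5 (n : ℕ) (c : Fin n → ℕ) (hc : ∀ v, c v ≤ n - 1)
    (l : List (Fin n)) (hlen : l.length = n) (hleg : LegalListK n c l) :
    l.Nodup := by
  have := key n l c 0 (fun _ => False) (by omega) (by simp) (by intro v _; simpa using hc v) hleg
  exact this.1
end

section
/- Every configuration of a finite graph G with no isolated vertices having at least 2|E(G)| − |V(G)| + 1 chips in total is volatile. -/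
variable {V : Type*} [Fintype V] [DecidableEq V]

lemma sum_ite_adj (G : SimpleGraph V) [DecidableRel G.Adj] (v : V) :
    ∑ u, (if G.Adj v u then 1 else 0) = G.degree v := by
  simp [SimpleGraph.degree, SimpleGraph.neighborFinset_eq_filter, Finset.sum_boole]

lemma sum_fire (G : SimpleGraph V) [DecidableRel G.Adj] (c : V → ℕ) (v : V)
    (hle : G.degree v ≤ c v) : ∑ u, fire G c v u = ∑ u, c u := by
  have hv : v ∈ (Finset.univ : Finset V) := Finset.mem_univ v
  rw [← Finset.add_sum_erase _ (fun u => fire G c v u) hv, ← Finset.add_sum_erase _ c hv]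
  have h1 : fire G c v v = c v - G.degree v := by simp [fire]
  have h2 : ∑ u ∈ Finset.univ.erase v, fire G c v u
      = ∑ u ∈ Finset.univ.erase v, (c u + if G.Adj v u then 1 else 0) := by
    apply Finset.sum_congr rfl
    intro u hu
    simp [fire, (Finset.mem_erase.mp hu).1]
  have h3 : ∑ u ∈ Finset.univ.erase v, (if G.Adj v u then 1 else 0) = G.degree v := by
    rw [← sum_ite_adj G v, ← Finset.add_sum_erase _ _ hv]
    simp [G.irrefl]
  rw [h1, h2, Finset.sum_add_distrib, h3]
  omega

lemma exists_fireable (G : SimpleGraph V) [DecidableRel G.Adj]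
    (hdeg : ∀ v, 0 < G.degree v) (c : V → ℕ)
    (h : 2 * G.edgeFinset.card - Fintype.card V + 1 ≤ ∑ v, c v) :
    ∃ v, G.degree v ≤ c v := by
  by_contra hcon
  push_neg at hcon
  have h1 : ∑ v, (c v + 1) ≤ ∑ v, G.degree v := by
    apply Finset.sum_le_sum
    intro v _
    exact hcon v
  rw [G.sum_degrees_eq_twice_card_edges] at h1
  rw [Finset.sum_add_distrib] at h1
  simp only [Finset.sum_const, Finset.card_univ, smul_eq_mul, mul_one] at h1
  omega


/-- Every configuration of a finite graph `G` without isolated vertices having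
at least `2|E(G)| - |V(G)| + 1` chips in total is volatile. -/
theorem stmt7 (G : SimpleGraph V) [DecidableRel G.Adj]
    (hdeg : ∀ v, 0 < G.degree v) (c : V → ℕ)
    (h : 2 * G.edgeFinset.card - Fintype.card V + 1 ≤ ∑ v, c v) :
    Volatile G c := by
  classical
  have hne : Nonempty V := by
    by_contra hV
    rw [not_nonempty_iff] at hV
    simp [Finset.univ_eq_empty] at h
  inhabit V
  -- pick function
  let pick : (V → ℕ) → V := fun c' =>
    if h : ∃ v, G.degree v ≤ c' v then h.choose else default
  -- sequence of configurations
  let p : ℕ → (V → ℕ) := fun m => Nat.rec c (fun _ c' => fire G c' (pick c')) m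
  have hp0 : p 0 = c := rfl
  have hpsucc : ∀ m, p (m + 1) = fire G (p m) (pick (p m)) := fun m => rfl
  -- invariant: sum preserved and fireable
  have pick_spec : ∀ c' : V → ℕ, (∃ v, G.degree v ≤ c' v) →
      G.degree (pick c') ≤ c' (pick c') := by
    intro c' hex
    have e : pick c' = hex.choose := dif_pos hex
    rw [e]
    exact hex.choose_spec
  have key : ∀ m, (∑ v, p m v = ∑ v, c v) ∧ G.degree (pick (p m)) ≤ p m (pick (p m)) := by
    intro m
    induction m with
    | zero =>
      refine ⟨rfl, ?_⟩
      exact pick_spec c (exists_fireable G hdeg c h)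
    | succ n ih =>
      have hs : ∑ v, p (n+1) v = ∑ v, c v := by
        rw [hpsucc, sum_fire G (p n) _ ih.2, ih.1]
      refine ⟨hs, ?_⟩
      exact pick_spec _ (exists_fireable G hdeg _ (hs ▸ h))
  refine ⟨fun m => pick (p m), ?_⟩
  have hiter : ∀ m, fireIter G c (fun m => pick (p m)) m = p m := by
    intro m
    induction m with
    | zero => rfl
    | succ n ih => rw [fireIter, ih]
  intro m
  rw [hiter]
  exact (key m).2
end

section
/- In the abelian chip-firing model: if a configuration c of a graph G is volatile, then for every finite legal firing sequence starting from c, the resulting configuration is still volatile. -/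
variable {V : Type*} [Fintype V] [DecidableEq V]

lemma fire_ne (G : SimpleGraph V) [DecidableRel G.Adj] (c : V → ℕ) (v u : V) (h : u ≠ v) :
    fire G c v u = c u + (if G.Adj v u then 1 else 0) := by
  simp [fire, h]

lemma fire_comm (G : SimpleGraph V) [DecidableRel G.Adj] (d : V → ℕ) (v w : V)
    (hvw : v ≠ w) (hv : G.degree v ≤ d v) (hw : G.degree w ≤ d w) :
    fire G (fire G d v) w = fire G (fire G d w) v := by
  funext u
  simp only [fire]
  split_ifs <;> simp_all <;> omega

lemma fireIter_congr (G : SimpleGraph V) [DecidableRel G.Adj] (c : V → ℕ) (f g : ℕ → V) :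
    ∀ m, (∀ i < m, f i = g i) → fireIter G c f m = fireIter G c g m := by
  intro m
  induction m with
  | zero => intro _; rfl
  | succ m ih =>
    intro h
    simp only [fireIter]
    rw [ih (fun i hi => h i (Nat.lt_succ_of_lt hi)), h m (Nat.lt_succ_self m)]

lemma keyA (G : SimpleGraph V) [DecidableRel G.Adj] (c : V → ℕ) (f : ℕ → V) (v : V)
    (hv : G.degree v ≤ c v) :
    ∀ m, (∀ i < m, f i ≠ v) → (∀ i < m, G.degree (f i) ≤ fireIter G c f i (f i)) →
      fireIter G (fire G c v) f m = fire G (fireIter G c f m) v ∧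
        G.degree v ≤ fireIter G c f m v := by
  intro m
  induction m with
  | zero => intro _ _; exact ⟨rfl, hv⟩
  | succ m ih =>
    intro hne hleg
    obtain ⟨h1, h2⟩ := ih (fun i hi => hne i (Nat.lt_succ_of_lt hi))
      (fun i hi => hleg i (Nat.lt_succ_of_lt hi))
    have hm := hleg m (Nat.lt_succ_self m)
    have hnm : v ≠ f m := fun h => hne m (Nat.lt_succ_self m) h.symm
    constructor
    · show fire G (fireIter G (fire G c v) f m) (f m) = _
      rw [h1, fire_comm G _ v (f m) hnm h2 hm]
      rfl
    · show G.degree v ≤ fire G (fireIter G c f m) (f m) v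
      rw [fire_ne G _ (f m) v hnm]
      omega

lemma volatile_fire (G : SimpleGraph V) [DecidableRel G.Adj] (c : V → ℕ) (v : V)
    (hv : G.degree v ≤ c v) (hvol : Volatile G c) : Volatile G (fire G c v) := by
  obtain ⟨f, hf⟩ := hvol
  by_cases hex : ∃ k, f k = v
  · classical
    let k := Nat.find hex
    have hk : f k = v := Nat.find_spec hex
    have hkmin : ∀ i < k, f i ≠ v := fun i hi => Nat.find_min hex hi
    refine ⟨fun m => if m < k then f m else f (m + 1), ?_⟩
    set g : ℕ → V := fun m => if m < k then f m else f (m + 1) with hg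
    have hagree : ∀ i < k, f i = g i := by
      intro i hi; simp [hg, hi]
    -- key: for m ≤ k, fireIter c' g m = fire (fireIter c f m) v
    have hstep1 : ∀ m ≤ k, fireIter G (fire G c v) g m = fire G (fireIter G c f m) v := by
      intro m hm
      have h1 := keyA G c g v hv m
        (fun i hi => by
          rw [← hagree i (lt_of_lt_of_le hi hm)]
          exact hkmin i (lt_of_lt_of_le hi hm))
        (fun i hi => by
          rw [← hagree i (lt_of_lt_of_le hi hm),
            ← fireIter_congr G c f g i (fun j hj => hagree j (hj.trans (lt_of_lt_of_le hi hm)))]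
          exact hf i)
      rw [h1.1, fireIter_congr G c g f m
        (fun j hj => (hagree j (lt_of_lt_of_le hj hm)).symm)]
    have hstep2 : ∀ m, k ≤ m → fireIter G (fire G c v) g m = fireIter G c f (m + 1) := by
      intro m hm
      induction m with
      | zero =>
        have hk0 : k = 0 := Nat.le_zero.mp hm
        have := hstep1 0 (by omega)
        rw [this]
        show fire G (fireIter G c f 0) v = fireIter G c f 1
        have : fireIter G c f 1 = fire G c (f 0) := rfl
        rw [this]
        show fire G c v = fire G c (f 0)
        rw [show f 0 = v from hk0 ▸ hk]
      | succ m ih =>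
        by_cases hmk : k ≤ m
        · have := ih hmk
          show fire G (fireIter G (fire G c v) g m) (g m) = _
          rw [this]
          have hgm : g m = f (m + 1) := by simp [hg, Nat.not_lt.mpr hmk]
          rw [hgm]
          rfl
        · -- k = m + 1
          have hkm : k = m + 1 := by omega
          have := hstep1 (m + 1) (by omega)
          rw [this]
          show fire G (fireIter G c f (m+1)) v = fire G (fireIter G c f (m+1)) (f (m+1))
          rw [← hkm, hk]
    intro m
    by_cases hm : m < k
    · rw [show g m = f m by simp [hg, hm], hstep1 m (le_of_lt hm),
        fire_ne G _ v (f m) (hkmin m hm)]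
      have := hf m
      omega
    · push_neg at hm
      rw [show g m = f (m + 1) by simp [hg, Nat.not_lt.mpr hm], hstep2 m hm]
      exact hf (m + 1)
  · push_neg at hex
    refine ⟨f, fun m => ?_⟩
    have h := keyA G c f v hv m (fun i _ => hex i) (fun i _ => hf i)
    rw [h.1, fire_ne G _ v (f m) (hex m)]
    have := hf m
    omega

/-- If `c` is volatile, then after any finite legal firing sequence the
resulting configuration is still volatile. -/
theorem stmt9 (G : SimpleGraph V) [DecidableRel G.Adj] (c : V → ℕ)
    (l : List V) (hleg : LegalList G c l) (hvol : Volatile G c) :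
    Volatile G (fireList G c l) := by
  induction l generalizing c with
  | nil => exact hvol
  | cons v l ih =>
    obtain ⟨h1, h2⟩ := hleg
    exact ih (fire G c v) h2 (volatile_fire G c v h1 hvol)
end

section
/- Consider the grid model of configurations of K_n where cell (i,j) (column i, row j) is filled iff vertex v_i (in nonincreasing order of chip counts) has at least j chips. Firing the vertex v₁ when it has exactly n−1 chips and all other vertices have at most n−2 chips has the following effect: the first column is emptied, all remaining filled cells shift up one unit and left one unit, and cells (1,1), (2,1), …, (n−1,1) are filled; the number of in-chips (filled cells (i,j) with i+j ≤ n) is unchanged. -/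
/-- In the sorted grid model of `K_n`, firing `v₁` when it has exactly `n-1`
chips and all other vertices have at most `n-2` chips empties the first column, shifts all
remaining filled cells up one unit and left one unit and fills the bottom row (i.e. the new
sorted counts are `c'ᵢ = c_{i+1} + 1` for `i < n-1` and `c'_{n-1} = 0`, and `c'` is a sorted
rearrangement of the fired configuration); the number of in-chips `∑ᵢ min(cᵢ, n-1-i)` is
unchanged. -/
theorem stmt11 (n : ℕ) (hn : 2 ≤ n) (c : Fin n → ℕ) (hsort : Antitone c)
    (h0 : c ⟨0, by omega⟩ = n - 1)
    (h1 : ∀ i : Fin n, i ≠ ⟨0, by omega⟩ → c i ≤ n - 2) :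
    ∃ c' : Fin n → ℕ,
      (∀ i : Fin n, c' i = if h : (i : ℕ) + 1 < n then c ⟨(i : ℕ) + 1, h⟩ + 1 else 0) ∧
      Antitone c' ∧
      (∃ σ : Equiv.Perm (Fin n), ∀ i, c' i = fireK n c ⟨0, by omega⟩ (σ i)) ∧
      ∑ i : Fin n, min (c' i) (n - 1 - (i : ℕ)) =
        ∑ i : Fin n, min (c i) (n - 1 - (i : ℕ)) := by
  obtain ⟨m, rfl⟩ : ∃ m, n = m + 1 := ⟨n - 1, by omega⟩
  have hm : 1 ≤ m := by omega
  set c' : Fin (m+1) → ℕ :=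
    fun i => if h : (i : ℕ) + 1 < m + 1 then c ⟨(i : ℕ) + 1, h⟩ + 1 else 0 with hc'
  have h00 : (⟨0, by omega⟩ : Fin (m+1)) = 0 := rfl
  have h0' : c 0 = m := by rw [← h00]; simpa using h0
  refine ⟨c', fun i => rfl, ?_, ?_, ?_⟩
  · intro i j hij
    simp only [hc']
    by_cases hj : (j : ℕ) + 1 < m + 1
    · have hi : (i : ℕ) + 1 < m + 1 := by have := Fin.le_def.mp hij; omega
      rw [dif_pos hj, dif_pos hi]
      have : c ⟨(j:ℕ)+1, hj⟩ ≤ c ⟨(i:ℕ)+1, hi⟩ := by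
        apply hsort
        simp only [Fin.le_def]
        have := Fin.le_def.mp hij
        omega
      omega
    · rw [dif_neg hj]; exact Nat.zero_le _
  · refine ⟨Equiv.addRight 1, fun i => ?_⟩
    simp only [Equiv.coe_addRight, fireK, h00]
    by_cases hi : (i : ℕ) + 1 < m + 1
    · have hv : ((i + 1 : Fin (m+1)) : ℕ) = (i : ℕ) + 1 := by
        rw [Fin.val_add_one_of_lt]
        exact Fin.lt_last_iff_ne_last.mpr (fun h => by simp [h] at hi)
      have hne : (i + 1 : Fin (m+1)) ≠ 0 := by
        intro h
        rw [h] at hv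
        simp at hv
      rw [if_neg hne, hc']
      simp only [dif_pos hi]
      congr 1
      exact congrArg c (Fin.ext hv.symm)
    · have hil : i = Fin.last m := Fin.ext (by have := i.isLt; simp [Fin.last]; omega)
      rw [hil, Fin.last_add_one, if_pos rfl, hc']
      have : ¬ ((Fin.last m : ℕ) + 1 < m + 1) := by simp [Fin.last]
      simp only [dif_neg this]
      omega
  · simp only [Nat.add_sub_cancel]
    rw [Fin.sum_univ_castSucc (f := fun i => min (c' i) (m - (i : ℕ))),
        Fin.sum_univ_succ (f := fun i => min (c i) (m - (i : ℕ)))]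
    have hlast : c' (Fin.last m) = 0 := by
      rw [hc']; exact dif_neg (by simp [Fin.last])
    have hterm : ∀ i : Fin m, min (c' i.castSucc) (m - (i.castSucc : ℕ))
        = min (c i.succ) (m - ((i.succ : ℕ))) + 1 := by
      intro i
      have hi : (i.castSucc : ℕ) + 1 < m + 1 := by simp [i.isLt]
      have : c' i.castSucc = c i.succ + 1 := by
        rw [hc']; simp only [dif_pos hi]
        exact congrArg (· + 1) (congrArg c (Fin.ext (by simp)))
      rw [this]
      have h2 : m - (i.castSucc : ℕ) = (m - ((i.succ : ℕ))) + 1 := by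
        have := i.isLt; simp [Fin.val_succ]; omega
      rw [h2, Nat.succ_min_succ]
    simp only [hterm, hlast, h0']
    rw [Finset.sum_add_distrib]
    simp [Finset.card_univ]
    omega
end
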